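/- Let H be the group with presentation: generators σ, σ̃, ζ, a₁, b₁, …, a_g, b_g, ã₁, b̃₁, …, ã_g, b̃_g (g ≥ 1); relations: all pairs of distinct generators commute except the pairs {a_i, b_i}, {ã_i, b̃_i}, {b_i, ã_i}, {a_i, b̃_i}; and [a_i, b_i] = σ², [ã_i, b̃_i] = σ̃², [a_i, b̃_i] = [ã_i, b_i] = ζ for each i. Then the center of H is the free abelian group of rank 3 generated by σ, σ̃, ζ. -/

import Mathlib

open scoped commutatorElement

/-- Generators: `σ`, `σ̃`, `ζ`, and `aᵢ`, `bᵢ`, `ãᵢ`, `b̃ᵢ` for `i = 1, …, g`. -/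
inductive Gen10 (g : ℕ)
  | sigma : Gen10 g
  | sigmat : Gen10 g
  | zeta : Gen10 g
  | a : Fin g → Gen10 g
  | b : Fin g → Gen10 g
  | at_ : Fin g → Gen10 g
  | bt : Fin g → Gen10 g

/-- `x` and `y` form one of the exceptional (non-commuting) pairs
`{aᵢ, bᵢ}`, `{ãᵢ, b̃ᵢ}`, `{bᵢ, ãᵢ}`, `{aᵢ, b̃ᵢ}`. -/
def Gen10.exceptional {g : ℕ} (x y : Gen10 g) : Prop :=
  ∃ i : Fin g,
    (x = .a i ∧ y = .b i) ∨ (x = .b i ∧ y = .a i) ∨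
    (x = .at_ i ∧ y = .bt i) ∨ (x = .bt i ∧ y = .at_ i) ∨
    (x = .b i ∧ y = .at_ i) ∨ (x = .at_ i ∧ y = .b i) ∨
    (x = .a i ∧ y = .bt i) ∨ (x = .bt i ∧ y = .a i)

/-- The defining relators: all pairs of distinct generators commute except the
exceptional pairs, and `[aᵢ,bᵢ] = σ²`, `[ãᵢ,b̃ᵢ] = σ̃²`, `[aᵢ,b̃ᵢ] = [ãᵢ,bᵢ] = ζ`. -/
def rels10 (g : ℕ) : Set (FreeGroup (Gen10 g)) :=
  { r | ∃ x y : Gen10 g, x ≠ y ∧ ¬ Gen10.exceptional x y ∧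
      r = ⁅FreeGroup.of x, FreeGroup.of y⁆ } ∪
  { r | ∃ i : Fin g,
      r = ⁅FreeGroup.of (Gen10.a i), FreeGroup.of (Gen10.b i)⁆ *
            (FreeGroup.of (Gen10.sigma (g := g)) ^ 2)⁻¹ } ∪
  { r | ∃ i : Fin g,
      r = ⁅FreeGroup.of (Gen10.at_ i), FreeGroup.of (Gen10.bt i)⁆ *
            (FreeGroup.of (Gen10.sigmat (g := g)) ^ 2)⁻¹ } ∪
  { r | ∃ i : Fin g,
      r = ⁅FreeGroup.of (Gen10.a i), FreeGroup.of (Gen10.bt i)⁆ *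
            (FreeGroup.of (Gen10.zeta (g := g)))⁻¹ } ∪
  { r | ∃ i : Fin g,
      r = ⁅FreeGroup.of (Gen10.at_ i), FreeGroup.of (Gen10.b i)⁆ *
            (FreeGroup.of (Gen10.zeta (g := g)))⁻¹ }

/-!
Let `S = ⟨σ, σ̃, ζ⟩`. Every defining relation makes `σ`, `σ̃`, `ζ` commute with all generators,
so `S` is central, and every commutator of two generators lies in `S`, so `H ⧸ S` is abelian and
is generated by the images of the `4g` generators `aᵢ, bᵢ, ãᵢ, b̃ᵢ`.

The relations are realised in the central extension of `ℤ^{4g}` by `ℤ³` defined by a bilinear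
cocycle whose antisymmetrisation pairs `aᵢ` with `bᵢ`, `ãᵢ` with `b̃ᵢ` and `aᵢ, ãᵢ` with
`b̃ᵢ, bᵢ`. Composing the vector part of `H → model` with the map `ℤ^{4g} → H ⧸ S` sending basis
vectors to generators gives back the quotient map, so an element of `H` with vector part zero
lies in `S`. A central element of `H` commutes with the images of all `aᵢ` and `bᵢ` in the
model, which forces its vector part to vanish. Finally `σ, σ̃, ζ` go to the standard basis of
the centre `ℤ³` of the model, so they are independent.
-/

lemma PresentedGroup.mem_center_iff {α : Type*} {rels : Set (FreeGroup α)}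
    {z : PresentedGroup rels} : z ∈ Subgroup.center (PresentedGroup rels) ↔
      ∀ x, Commute (PresentedGroup.of x) z := by
  rw [← Subgroup.centralizer_univ, ← Subgroup.coe_top, ← PresentedGroup.closure_range_of,
    Subgroup.centralizer_closure, Subgroup.mem_centralizer_iff, Set.forall_mem_range]
  rfl

lemma Subgroup.normal_of_le_center {G : Type*} [Group G] {N : Subgroup G}
    (h : N ≤ Subgroup.center G) : N.Normal :=
  ⟨fun n hn x => by rwa [Subgroup.mem_center_iff.mp (h hn) x, mul_inv_cancel_right]⟩

lemma QuotientGroup.mul_comm_of_commutatorElement_mem {G : Type*} [Group G] {S : Set G}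
    (hS : Subgroup.closure S = ⊤) {N : Subgroup G} [N.Normal]
    (hN : ∀ s ∈ S, ∀ t ∈ S, ⁅s, t⁆ ∈ N) (x y : G ⧸ N) : x * y = y * x := by
  have hcomm : ∀ u ∈ (QuotientGroup.mk' N) '' S, ∀ v ∈ (QuotientGroup.mk' N) '' S,
      u * v = v * u := by
    rintro _ ⟨s, hs, rfl⟩ _ ⟨t, ht, rfl⟩
    rw [← commutatorElement_eq_one_iff_mul_comm, ← map_commutatorElement,
      QuotientGroup.mk'_apply, QuotientGroup.eq_one_iff]
    exact hN s hs t ht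
  have hgen : ∀ u : G ⧸ N, u ∈ Subgroup.closure ((QuotientGroup.mk' N) '' S) := fun u => by
    rw [← MonoidHom.map_closure, hS, ← MonoidHom.range_eq_map,
      MonoidHom.range_eq_top.mpr (QuotientGroup.mk'_surjective N)]
    trivial
  exact Set.centralizer_centralizer_comm_of_comm hcomm x
    (Subgroup.closure_le_centralizer_centralizer _ (hgen x)) y
    (Subgroup.closure_le_centralizer_centralizer _ (hgen y))

@[ext]
structure BilinCentralExt {V Z : Type*} [AddCommGroup V] [AddCommGroup Z]
    (β : V →+ V →+ Z) where
  vec : V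
  cen : Z

namespace BilinCentralExt

variable {V Z : Type*} [AddCommGroup V] [AddCommGroup Z] {β : V →+ V →+ Z}

instance : Mul (BilinCentralExt β) :=
  ⟨fun X Y => ⟨X.vec + Y.vec, X.cen + Y.cen + β X.vec Y.vec⟩⟩
instance : One (BilinCentralExt β) := ⟨⟨0, 0⟩⟩
instance : Inv (BilinCentralExt β) := ⟨fun X => ⟨-X.vec, -X.cen + β X.vec X.vec⟩⟩

@[simp] lemma mul_vec (X Y : BilinCentralExt β) : (X * Y).vec = X.vec + Y.vec := rfl
@[simp] lemma mul_cen (X Y : BilinCentralExt β) :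
    (X * Y).cen = X.cen + Y.cen + β X.vec Y.vec := rfl
@[simp] lemma one_vec : (1 : BilinCentralExt β).vec = 0 := rfl
@[simp] lemma one_cen : (1 : BilinCentralExt β).cen = 0 := rfl
@[simp] lemma inv_vec (X : BilinCentralExt β) : X⁻¹.vec = -X.vec := rfl
@[simp] lemma inv_cen (X : BilinCentralExt β) : X⁻¹.cen = -X.cen + β X.vec X.vec := rfl

instance : Group (BilinCentralExt β) where
  mul_assoc _ _ _ := by ext <;> simp <;> abel
  one_mul _ := by ext <;> simp
  mul_one _ := by ext <;> simp
  inv_mul_cancel _ := by ext <;> simp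

lemma commutatorElement_eq (X Y : BilinCentralExt β) :
    ⁅X, Y⁆ = ⟨0, β X.vec Y.vec - β Y.vec X.vec⟩ := by
  ext <;> simp [commutatorElement_def]; abel

lemma commute_iff {X Y : BilinCentralExt β} :
    Commute X Y ↔ β X.vec Y.vec = β Y.vec X.vec := by
  rw [← commutatorElement_eq_one_iff_commute, commutatorElement_eq, BilinCentralExt.ext_iff]
  simp [sub_eq_zero]

def vecHom : BilinCentralExt β →* Multiplicative V where
  toFun X := .ofAdd X.vec
  map_one' := rfl
  map_mul' _ _ := rfl

def ofCen : Multiplicative Z →* BilinCentralExt β where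
  toFun z := ⟨0, z.toAdd⟩
  map_one' := rfl
  map_mul' _ _ := by ext <;> simp

end BilinCentralExt

def blockDiagForm {κ ι Z : Type*} [Fintype κ] [Fintype ι] [AddCommGroup Z] (c : κ → κ → Z) :
    (κ × ι → ℤ) →+ (κ × ι → ℤ) →+ Z :=
  AddMonoidHom.mk'
    (fun v => AddMonoidHom.mk' (fun w => ∑ i, ∑ k, ∑ l, (v (k, i) * w (l, i)) • c k l)
      fun w w' => by simp [mul_add, add_smul, Finset.sum_add_distrib])
    fun v v' => by ext w; simp [add_mul, add_smul, Finset.sum_add_distrib]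

section

variable {κ ι Z : Type*} [Fintype κ] [Fintype ι] [DecidableEq κ] [DecidableEq ι] [AddCommGroup Z]
  (c : κ → κ → Z)

lemma blockDiagForm_single_right (v : κ × ι → ℤ) (l : κ) (j : ι) :
    blockDiagForm c v (Pi.single (l, j) 1) = ∑ k, v (k, j) • c k l := by
  simp [blockDiagForm, Pi.single_apply, ite_smul, ite_and, Finset.sum_ite_irrel]

lemma blockDiagForm_single_left (v : κ × ι → ℤ) (l : κ) (j : ι) :
    blockDiagForm c (Pi.single (l, j) 1) v = ∑ k, v (k, j) • c l k := by
  simp [blockDiagForm, Pi.single_apply, ite_smul, ite_and, Finset.sum_ite_irrel]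

lemma blockDiagForm_single_single (k l : κ) (i j : ι) :
    blockDiagForm c (Pi.single (k, i) 1) (Pi.single (l, j) 1) = if i = j then c k l else 0 := by
  rw [blockDiagForm_single_right]
  simp [Pi.single_apply, ite_and, eq_comm]

end

namespace Gen10
variable {g : ℕ}

/-- Slots `0, 1, 2, 3` stand for `a, b, ã, b̃`. In the model the commutator of the generators in
slots `k, l` with the same index `i` is `pairing k l - pairing l k`, which is `(2, 0, 0) = σ²` for
`(a, b)`, `(0, 2, 0) = σ̃²` for `(ã, b̃)`, `(0, 0, 1) = ζ` for `(a, b̃)` and `(ã, b)`, and `0` for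
every other pair. -/
def pairing : Fin 4 → Fin 4 → ℤ × ℤ × ℤ :=
  ![![0, 0, 0, 0],
    ![(-2, 0, 0), 0, 0, 0],
    ![0, (0, 0, 1), 0, 0],
    ![(0, 0, -1), 0, (0, -2, 0), 0]]

abbrev Model (g : ℕ) := BilinCentralExt (blockDiagForm (ι := Fin g) pairing)

def toModel : Gen10 g → Model g
  | sigma => ⟨0, (1, 0, 0)⟩
  | sigmat => ⟨0, (0, 1, 0)⟩
  | zeta => ⟨0, (0, 0, 1)⟩
  | a i => ⟨Pi.single (0, i) 1, 0⟩
  | b i => ⟨Pi.single (1, i) 1, 0⟩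
  | at_ i => ⟨Pi.single (2, i) 1, 0⟩
  | bt i => ⟨Pi.single (3, i) 1, 0⟩

lemma commute_toModel_of_not_exceptional {x y : Gen10 g} (h : ¬ x.exceptional y) :
    Commute (toModel x) (toModel y) := by
  rw [BilinCentralExt.commute_iff]
  cases x <;> cases y <;>
    simp [toModel, blockDiagForm_single_single, exceptional, pairing] at h ⊢ <;> grind

lemma commutatorElement_toModel_a_b (i : Fin g) :
    ⁅toModel (a i), toModel (b i)⁆ = toModel sigma ^ 2 := by
  rw [BilinCentralExt.commutatorElement_eq, pow_two]
  ext <;> simp <;> simp [toModel, blockDiagForm_single_single, pairing]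

lemma commutatorElement_toModel_at_bt (i : Fin g) :
    ⁅toModel (at_ i), toModel (bt i)⁆ = toModel sigmat ^ 2 := by
  rw [BilinCentralExt.commutatorElement_eq, pow_two]
  ext <;> simp <;> simp [toModel, blockDiagForm_single_single, pairing]

lemma commutatorElement_toModel_a_bt (i : Fin g) :
    ⁅toModel (a i), toModel (bt i)⁆ = toModel zeta := by
  rw [BilinCentralExt.commutatorElement_eq]
  ext <;> simp <;> simp [toModel, blockDiagForm_single_single, pairing]

lemma commutatorElement_toModel_at_b (i : Fin g) :
    ⁅toModel (at_ i), toModel (b i)⁆ = toModel zeta := by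
  rw [BilinCentralExt.commutatorElement_eq]
  ext <;> simp <;> simp [toModel, blockDiagForm_single_single, pairing]

lemma lift_toModel_of_mem {r : FreeGroup (Gen10 g)} (hr : r ∈ rels10 g) :
    FreeGroup.lift toModel r = 1 := by
  rcases hr with ((((⟨x, y, -, hxy, rfl⟩ | ⟨i, rfl⟩) | ⟨i, rfl⟩) | ⟨i, rfl⟩) | ⟨i, rfl⟩) <;>
    simp only [map_mul, map_inv, map_pow, map_commutatorElement, FreeGroup.lift_apply_of,
      mul_inv_eq_one, commutatorElement_eq_one_iff_commute]
  · exact commute_toModel_of_not_exceptional hxy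
  · exact commutatorElement_toModel_a_b i
  · exact commutatorElement_toModel_at_bt i
  · exact commutatorElement_toModel_a_bt i
  · exact commutatorElement_toModel_at_b i

def toModelHom : PresentedGroup (rels10 g) →* Model g :=
  PresentedGroup.toGroup fun _ => lift_toModel_of_mem

@[simp] lemma toModelHom_of (x : Gen10 g) : toModelHom (PresentedGroup.of x) = toModel x :=
  PresentedGroup.toGroup.of _

lemma vec_eq_zero_of_forall_commute {X : Model g} (hX : ∀ y, Commute X (toModel y)) :
    X.vec = 0 := by
  funext ⟨k, j⟩
  have ha := BilinCentralExt.commute_iff.mp (hX (a j))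
  have hb := BilinCentralExt.commute_iff.mp (hX (b j))
  simp [toModel, blockDiagForm_single_left, blockDiagForm_single_right, Fin.sum_univ_four,
    pairing, Prod.ext_iff] at ha hb
  fin_cases k <;> simp <;> omega

open PresentedGroup

def sigmaZetaSubgroup (g : ℕ) : Subgroup (PresentedGroup (rels10 g)) :=
  Subgroup.closure {of sigma, of sigmat, of zeta}

local notation "H" => PresentedGroup (rels10 g)

lemma commute_of_not_exceptional {x y : Gen10 g} (h : ¬ x.exceptional y) :
    Commute (of x : H) (of y) := by
  by_cases hxy : x = y
  · rw [hxy]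
  · rw [← commutatorElement_eq_one_iff_commute]
    exact one_of_mem (Or.inl (Or.inl (Or.inl (Or.inl ⟨x, y, hxy, h, rfl⟩))))

lemma commutatorElement_of_a_b (i : Fin g) :
    ⁅(of (a i) : H), (of (b i) : H)⁆ = (of sigma : H) ^ 2 :=
  mk_eq_mk_of_mul_inv_mem (Or.inl (Or.inl (Or.inl (Or.inr ⟨i, rfl⟩))))

lemma commutatorElement_of_at_bt (i : Fin g) :
    ⁅(of (at_ i) : H), (of (bt i) : H)⁆ = (of sigmat : H) ^ 2 :=
  mk_eq_mk_of_mul_inv_mem (Or.inl (Or.inl (Or.inr ⟨i, rfl⟩)))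

lemma commutatorElement_of_a_bt (i : Fin g) :
    ⁅(of (a i) : H), (of (bt i) : H)⁆ = (of zeta : H) :=
  mk_eq_mk_of_mul_inv_mem (Or.inl (Or.inr ⟨i, rfl⟩))

lemma commutatorElement_of_at_b (i : Fin g) :
    ⁅(of (at_ i) : H), (of (b i) : H)⁆ = (of zeta : H) :=
  mk_eq_mk_of_mul_inv_mem (Or.inr ⟨i, rfl⟩)

lemma of_sigma_mem : (of sigma : H) ∈ sigmaZetaSubgroup g := Subgroup.subset_closure (by simp)
lemma of_sigmat_mem : (of sigmat : H) ∈ sigmaZetaSubgroup g := Subgroup.subset_closure (by simp)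
lemma of_zeta_mem : (of zeta : H) ∈ sigmaZetaSubgroup g := Subgroup.subset_closure (by simp)

lemma sigmaZetaSubgroup_le_center : sigmaZetaSubgroup g ≤ Subgroup.center H := by
  rw [sigmaZetaSubgroup, Subgroup.closure_le]
  rintro _ (rfl | rfl | rfl) <;> rw [SetLike.mem_coe, mem_center_iff] <;>
    exact fun y => (commute_of_not_exceptional (by simp [exceptional])).symm

instance : (sigmaZetaSubgroup g).Normal :=
  Subgroup.normal_of_le_center sigmaZetaSubgroup_le_center

lemma commutatorElement_of_mem_sigmaZetaSubgroup (x y : Gen10 g) :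
    ⁅(of x : H), (of y : H)⁆ ∈ sigmaZetaSubgroup g := by
  by_cases h : x.exceptional y
  · obtain ⟨i, h⟩ := h
    have swap {u v : H} (huv : ⁅u, v⁆ ∈ sigmaZetaSubgroup g) :
        ⁅v, u⁆ ∈ sigmaZetaSubgroup g := by
      rwa [← commutatorElement_inv, inv_mem_iff]
    have hab := (commutatorElement_of_a_b i).symm ▸ pow_mem of_sigma_mem 2
    have hatbt := (commutatorElement_of_at_bt i).symm ▸ pow_mem of_sigmat_mem 2
    have habt := (commutatorElement_of_a_bt i).symm ▸ of_zeta_mem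
    have hatb := (commutatorElement_of_at_b i).symm ▸ of_zeta_mem
    rcases h with ⟨rfl, rfl⟩ | ⟨rfl, rfl⟩ | ⟨rfl, rfl⟩ | ⟨rfl, rfl⟩ | ⟨rfl, rfl⟩ | ⟨rfl, rfl⟩ |
      ⟨rfl, rfl⟩ | ⟨rfl, rfl⟩
    exacts [hab, swap hab, hatbt, swap hatbt, swap hatb, hatb, habt, swap habt]
  · rw [commutatorElement_eq_one_iff_commute.mpr (commute_of_not_exceptional h)]
    exact one_mem _

instance : CommGroup (H ⧸ sigmaZetaSubgroup g) where
  mul_comm := QuotientGroup.mul_comm_of_commutatorElement_mem (closure_range_of _)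
    (by rintro _ ⟨x, rfl⟩ _ ⟨y, rfl⟩; exact commutatorElement_of_mem_sigmaZetaSubgroup x y)

def vecGen : Fin 4 × Fin g → Gen10 g
  | (k, i) => ![a, b, at_, bt] k i

def ofVec : Multiplicative (Fin 4 × Fin g → ℤ) →* H ⧸ sigmaZetaSubgroup g :=
  AddMonoidHom.toMultiplicativeLeft
    (Fintype.linearCombination ℤ fun p =>
      Additive.ofMul (QuotientGroup.mk (of (vecGen p)))).toAddMonoidHom

lemma ofVec_comp_toModelHom :
    ofVec.comp (BilinCentralExt.vecHom.comp toModelHom) =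
      QuotientGroup.mk' (sigmaZetaSubgroup g) := by
  refine PresentedGroup.ext fun x => ?_
  cases x <;> simp [ofVec, BilinCentralExt.vecHom, toModel, vecGen, eq_comm (a := (1 : _ ⧸ _)),
    of_sigma_mem, of_sigmat_mem, of_zeta_mem]

lemma center_le_sigmaZetaSubgroup : Subgroup.center H ≤ sigmaZetaSubgroup g := by
  intro z hz
  have hvec : (toModelHom z).vec = 0 := vec_eq_zero_of_forall_commute fun y => by
    simpa using ((PresentedGroup.mem_center_iff.mp hz y).map toModelHom).symm
  rw [← QuotientGroup.eq_one_iff, ← QuotientGroup.mk'_apply, ← ofVec_comp_toModelHom]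
  simp [BilinCentralExt.vecHom, hvec]

lemma toModelHom_sigma_zeta (m n p : ℤ) :
    toModelHom ((of sigma : H) ^ m * of sigmat ^ n * of zeta ^ p) =
      BilinCentralExt.ofCen (Multiplicative.ofAdd (m, n, p)) := by
  have hσ : toModel (g := g) sigma = BilinCentralExt.ofCen (.ofAdd (1, 0, 0)) := rfl
  have hσ' : toModel (g := g) sigmat = BilinCentralExt.ofCen (.ofAdd (0, 1, 0)) := rfl
  have hζ : toModel (g := g) zeta = BilinCentralExt.ofCen (.ofAdd (0, 0, 1)) := rfl
  simp only [map_mul, map_zpow, toModelHom_of, hσ, hσ', hζ]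
  simp only [← map_zpow, ← map_mul, ← ofAdd_zsmul, ← ofAdd_add]
  congr
  simp

end Gen10

open Gen10 in
theorem stmt_10_general (g : ℕ) :
    Subgroup.center (PresentedGroup (rels10 g)) =
      Subgroup.closure {PresentedGroup.of Gen10.sigma, PresentedGroup.of Gen10.sigmat,
        PresentedGroup.of Gen10.zeta} ∧
    (∀ m n p : ℤ, (PresentedGroup.of (rels := rels10 g) Gen10.sigma) ^ m *
        (PresentedGroup.of (rels := rels10 g) Gen10.sigmat) ^ n *
        (PresentedGroup.of (rels := rels10 g) Gen10.zeta) ^ p = 1 →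
        m = 0 ∧ n = 0 ∧ p = 0) := by
  refine ⟨le_antisymm center_le_sigmaZetaSubgroup sigmaZetaSubgroup_le_center, fun m n p h => ?_⟩
  have hcen := congrArg BilinCentralExt.cen (toModelHom_sigma_zeta (g := g) m n p)
  simpa [h, BilinCentralExt.ofCen] using hcen.symm

/-- The center of the presented group `H` is the free abelian group of rank 3
generated by `σ`, `σ̃` and `ζ`. -/
theorem stmt_10 (g : ℕ) (hg : 1 ≤ g) :
    Subgroup.center (PresentedGroup (rels10 g)) =
      Subgroup.closure {PresentedGroup.of Gen10.sigma, PresentedGroup.of Gen10.sigmat,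
        PresentedGroup.of Gen10.zeta} ∧
    (∀ m n p : ℤ, (PresentedGroup.of (rels := rels10 g) Gen10.sigma) ^ m *
        (PresentedGroup.of (rels := rels10 g) Gen10.sigmat) ^ n *
        (PresentedGroup.of (rels := rels10 g) Gen10.zeta) ^ p = 1 →
        m = 0 ∧ n = 0 ∧ p = 0) :=
  stmt_10_general g
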